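/- arXiv:1306.0259 — 6 statements merged into one kernel-verified Lean document; each statement's English description precedes it below -/
import Mathlib

section
/- Let g : I → ℝ be a convex function on an interval I and f : I → ℝ. Then f is g-convex dominated on I if and only if there exist two convex mappings h, k on I such that f = (h - k)/2 and g = (h + k)/2. -/
def ConvexDominated (I : Set ℝ) (g f : ℝ → ℝ) : Prop :=
  ∀ x ∈ I, ∀ y ∈ I, ∀ l : ℝ, l ∈ Set.Icc (0:ℝ) 1 →
    |l * f x + (1 - l) * f y - f (l * x + (1 - l) * y)| ≤
      l * g x + (1 - l) * g y - g (l * x + (1 - l) * y)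

theorem stmt1 (I : Set ℝ) (hI : Convex ℝ I) (g f : ℝ → ℝ) (hg : ConvexOn ℝ I g) :
    ConvexDominated I g f ↔
      ∃ h k : ℝ → ℝ, ConvexOn ℝ I h ∧ ConvexOn ℝ I k ∧
        (∀ x ∈ I, f x = (h x - k x) / 2) ∧ (∀ x ∈ I, g x = (h x + k x) / 2) := by
  constructor
  · intro hd
    refine ⟨g + f, g - f, ?_, ?_, ?_, ?_⟩
    · refine ⟨hI, ?_⟩
      intro x hx y hy a b ha hb hab
      have hd' := hd x hx y hy a ⟨ha, by linarith⟩
      have hb' : 1 - a = b := by linarith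
      rw [hb'] at hd'
      have h1 := (abs_le.mp hd').1
      simp only [Pi.add_apply, smul_eq_mul]
      nlinarith [h1]
    · refine ⟨hI, ?_⟩
      intro x hx y hy a b ha hb hab
      have hd' := hd x hx y hy a ⟨ha, by linarith⟩
      have hb' : 1 - a = b := by linarith
      rw [hb'] at hd'
      have h1 := (abs_le.mp hd').2
      simp only [Pi.sub_apply, smul_eq_mul]
      nlinarith [h1]
    · intro x hx; simp only [Pi.add_apply, Pi.sub_apply]; ring
    · intro x hx; simp only [Pi.add_apply, Pi.sub_apply]; ring
  · rintro ⟨h, k, hh, hk, hf, hgeq⟩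
    intro x hx y hy l ⟨hl0, hl1⟩
    have hz : l * x + (1 - l) * y ∈ I := by
      have := hI hx hy hl0 (by linarith : (0:ℝ) ≤ 1 - l) (by ring)
      simpa [smul_eq_mul] using this
    have hhz := hh.2 hx hy hl0 (by linarith : (0:ℝ) ≤ 1 - l) (by ring)
    have hkz := hk.2 hx hy hl0 (by linarith : (0:ℝ) ≤ 1 - l) (by ring)
    simp only [smul_eq_mul] at hhz hkz
    rw [hf x hx, hf y hy, hf _ hz, hgeq x hx, hgeq y hy, hgeq _ hz]
    rw [abs_le]
    constructor <;> nlinarith [hhz, hkz]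
end

section
/- Suppose f : [a,b] × [c,d] → ℝ is convex on the co-ordinates (a < b, c < d) and integrable. Then f((a+b)/2, (c+d)/2) ≤ (1/((b-a)(d-c))) ∫_a^b ∫_c^d f(x,y) dy dx ≤ (f(a,c) + f(a,d) + f(b,c) + f(b,d))/4. -/
/-!
Both inequalities come from the one-dimensional Hermite–Hadamard inequality applied twice.
Integrating the convex slices `y ↦ f x y` gives a convex function `x ↦ ∫ y in c..d, f x y`
on `[a,b]`; Hermite–Hadamard for it in `x`, followed by Hermite–Hadamard in `y` on the slices
at `x = (a + b) / 2` and at `x = a, b`, yields the two bounds. Slices are integrable because a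
convex function on a compact interval is bounded and continuous in the interior.
-/

open MeasureTheory

/-- `f` is convex on the co-ordinates on `[a,b] × [c,d]`. -/
def CoordConvexOn (a b c d : ℝ) (f : ℝ → ℝ → ℝ) : Prop :=
  (∀ y ∈ Set.Icc c d, ConvexOn ℝ (Set.Icc a b) (fun x => f x y)) ∧
  (∀ x ∈ Set.Icc a b, ConvexOn ℝ (Set.Icc c d) (fun y => f x y))

open Set

namespace ConvexOn

variable {a b x : ℝ} {g : ℝ → ℝ}

lemma le_chord (hg : ConvexOn ℝ (Icc a b) g) (hab : a < b) (hx : x ∈ Icc a b) :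
    g x ≤ ((b - x) * g a + (x - a) * g b) / (b - a) := by
  have hba : 0 < b - a := sub_pos.2 hab
  have key := hg.2 (left_mem_Icc.2 hab.le) (right_mem_Icc.2 hab.le)
    (div_nonneg (sub_nonneg.2 hx.2) hba.le) (div_nonneg (sub_nonneg.2 hx.1) hba.le)
    (by field_simp; ring)
  simp only [smul_eq_mul] at key
  have hx_eq : (b - x) / (b - a) * a + (x - a) / (b - a) * b = x := by field_simp; ring
  rw [hx_eq] at key
  calc g x ≤ (b - x) / (b - a) * g a + (x - a) / (b - a) * g b := key
    _ = ((b - x) * g a + (x - a) * g b) / (b - a) := by ring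

lemma map_midpoint_le_of_mem_Icc (hg : ConvexOn ℝ (Icc a b) g) (hx : x ∈ Icc a b) :
    g ((a + b) / 2) ≤ (g x + g (a + b - x)) / 2 := by
  have hx' : a + b - x ∈ Icc a b := ⟨by linarith [hx.2], by linarith [hx.1]⟩
  have key := hg.2 hx hx' (by norm_num : (0 : ℝ) ≤ 1 / 2) (by norm_num : (0 : ℝ) ≤ 1 / 2)
    (by norm_num)
  have hmid : (1 / 2 : ℝ) • x + (1 / 2 : ℝ) • (a + b - x) = (a + b) / 2 := by
    simp only [smul_eq_mul]; ring
  rw [hmid, smul_eq_mul, smul_eq_mul] at key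
  linarith

/-- Above by the larger endpoint value; below, by reflecting through the midpoint. -/
lemma abs_le_of_mem_Icc (hg : ConvexOn ℝ (Icc a b) g) (hx : x ∈ Icc a b) :
    |g x| ≤ 2 * |g ((a + b) / 2)| + |max (g a) (g b)| := by
  have hab : a ≤ b := hx.1.trans hx.2
  have hx' : a + b - x ∈ Icc a b := ⟨by linarith [hx.2], by linarith [hx.1]⟩
  have h₁ := hg.le_max_of_mem_Icc (left_mem_Icc.2 hab) (right_mem_Icc.2 hab) hx
  have h₂ := hg.le_max_of_mem_Icc (left_mem_Icc.2 hab) (right_mem_Icc.2 hab) hx'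
  have hmid := hg.map_midpoint_le_of_mem_Icc hx
  rw [abs_le]
  constructor <;> linarith [neg_abs_le (g ((a + b) / 2)), le_abs_self (max (g a) (g b)),
    abs_nonneg (g ((a + b) / 2))]

lemma intervalIntegrable (hg : ConvexOn ℝ (Icc a b) g) (hab : a ≤ b) :
    IntervalIntegrable g volume a b := by
  rw [intervalIntegrable_iff_integrableOn_Icc_of_le hab, integrableOn_Icc_iff_integrableOn_Ioo]
  have hcont : ContinuousOn g (Ioo a b) := by
    simpa only [interior_Icc] using hg.continuousOn_interior
  refine ⟨hcont.aestronglyMeasurable measurableSet_Ioo,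
    HasFiniteIntegral.restrict_of_bounded (C := 2 * |g ((a + b) / 2)| + |max (g a) (g b)|)
      measure_Ioo_lt_top ?_⟩
  filter_upwards [ae_restrict_mem measurableSet_Ioo] with x hx
  exact hg.abs_le_of_mem_Icc (Ioo_subset_Icc_self hx)

theorem mul_map_midpoint_le_intervalIntegral (hg : ConvexOn ℝ (Icc a b) g) (hab : a ≤ b) :
    (b - a) * g ((a + b) / 2) ≤ ∫ x in a..b, g x := by
  have hgi := hg.intervalIntegrable hab
  have hrefl : IntervalIntegrable (fun x => g (a + b - x)) volume a b := by
    simpa using (hgi.comp_sub_left (a + b)).symm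
  have hrefl_eq : ∫ x in a..b, g (a + b - x) = ∫ x in a..b, g x := by simp
  calc (b - a) * g ((a + b) / 2) = ∫ _ in a..b, g ((a + b) / 2) := by simp
    _ ≤ ∫ x in a..b, (g x + g (a + b - x)) / 2 :=
      intervalIntegral.integral_mono_on hab intervalIntegrable_const
        ((hgi.add hrefl).div_const 2) fun x hx => hg.map_midpoint_le_of_mem_Icc hx
    _ = ∫ x in a..b, g x := by
      rw [intervalIntegral.integral_div, intervalIntegral.integral_add hgi hrefl, hrefl_eq]
      ring

theorem intervalIntegral_le_mul_add_div_two (hg : ConvexOn ℝ (Icc a b) g) (hab : a < b) :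
    ∫ x in a..b, g x ≤ (b - a) * (g a + g b) / 2 := by
  calc ∫ x in a..b, g x ≤ ∫ x in a..b, ((b - x) * g a + (x - a) * g b) / (b - a) :=
      intervalIntegral.integral_mono_on hab.le (hg.intervalIntegrable hab.le)
        (Continuous.intervalIntegrable (by fun_prop) a b) fun x hx => hg.le_chord hab hx
    _ = (b - a) * (g a + g b) / 2 := by
      have h_affine : ∀ x, (b - x) * g a + (x - a) * g b = (b * g a - a * g b) + (g b - g a) * x :=
        fun x => by ring
      have hba : b - a ≠ 0 := sub_ne_zero.2 hab.ne'
      simp only [h_affine, intervalIntegral.integral_div]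
      rw [intervalIntegral.integral_add intervalIntegrable_const
        (Continuous.intervalIntegrable (by fun_prop) a b), intervalIntegral.integral_const_mul,
        integral_id, intervalIntegral.integral_const, smul_eq_mul]
      field_simp
      ring

end ConvexOn

theorem ConvexOn.intervalIntegral {E : Type*} [AddCommGroup E] [Module ℝ E] {s : Set E}
    {c d : ℝ} {f : E → ℝ → ℝ} (hs : Convex ℝ s) (hcd : c ≤ d)
    (hconv : ∀ y ∈ Icc c d, ConvexOn ℝ s (f · y))
    (hint : ∀ x ∈ s, IntervalIntegrable (f x) volume c d) :
    ConvexOn ℝ s (fun x => ∫ y in c..d, f x y) := by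
  refine ⟨hs, fun x hx x' hx' t t' ht ht' htt' => ?_⟩
  have hx_int := (hint x hx).const_mul t
  have hx'_int := (hint x' hx').const_mul t'
  simp only [smul_eq_mul]
  calc ∫ y in c..d, f (t • x + t' • x') y ≤ ∫ y in c..d, (t * f x y + t' * f x' y) :=
      intervalIntegral.integral_mono_on hcd (hint _ (hs hx hx' ht ht' htt'))
        (hx_int.add hx'_int) fun y hy => (hconv y hy).2 hx hx' ht ht' htt'
    _ = (t * ∫ y in c..d, f x y) + t' * ∫ y in c..d, f x' y := by
      rw [intervalIntegral.integral_add hx_int hx'_int, intervalIntegral.integral_const_mul,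
        intervalIntegral.integral_const_mul]

theorem CoordConvexOn.convexOn_intervalIntegral {a b c d : ℝ} {f : ℝ → ℝ → ℝ}
    (hf : CoordConvexOn a b c d f) (hcd : c ≤ d) :
    ConvexOn ℝ (Icc a b) (fun x => ∫ y in c..d, f x y) :=
  ConvexOn.intervalIntegral (convex_Icc a b) hcd hf.1 fun x hx => (hf.2 x hx).intervalIntegrable hcd

theorem stmt4_general (a b c d : ℝ) (hab : a < b) (hcd : c < d) (f : ℝ → ℝ → ℝ)
    (hf : CoordConvexOn a b c d f) :
    f ((a + b) / 2) ((c + d) / 2) ≤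
        (1 / ((b - a) * (d - c))) * ∫ x in a..b, ∫ y in c..d, f x y ∧
      (1 / ((b - a) * (d - c))) * ∫ x in a..b, ∫ y in c..d, f x y ≤
        (f a c + f a d + f b c + f b d) / 4 := by
  have hba : 0 < b - a := sub_pos.2 hab
  have hdc : 0 < d - c := sub_pos.2 hcd
  have hg := hf.convexOn_intervalIntegral hcd.le
  have hmid : (a + b) / 2 ∈ Icc a b := ⟨by linarith, by linarith⟩
  rw [one_div, ← div_eq_inv_mul, le_div_iff₀ (mul_pos hba hdc), div_le_iff₀ (mul_pos hba hdc)]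
  constructor
  · have h_inner := (hf.2 _ hmid).mul_map_midpoint_le_intervalIntegral hcd.le
    have h_outer := hg.mul_map_midpoint_le_intervalIntegral hab.le
    nlinarith
  · have h_left := (hf.2 a (left_mem_Icc.2 hab.le)).intervalIntegral_le_mul_add_div_two hcd
    have h_right := (hf.2 b (right_mem_Icc.2 hab.le)).intervalIntegral_le_mul_add_div_two hcd
    have h_outer := hg.intervalIntegral_le_mul_add_div_two hab
    nlinarith

theorem stmt4 (a b c d : ℝ) (hab : a < b) (hcd : c < d) (f : ℝ → ℝ → ℝ)
    (hf : CoordConvexOn a b c d f)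
    (hint : IntegrableOn (fun p : ℝ × ℝ => f p.1 p.2) (Set.Icc a b ×ˢ Set.Icc c d)) :
    f ((a + b) / 2) ((c + d) / 2) ≤
        (1 / ((b - a) * (d - c))) * ∫ x in a..b, ∫ y in c..d, f x y ∧
      (1 / ((b - a) * (d - c))) * ∫ x in a..b, ∫ y in c..d, f x y ≤
        (f a c + f a d + f b c + f b d) / 4 :=
  stmt4_general a b c d hab hcd f hf
end

section
/- Suppose f : [a,b] × [c,d] → ℝ is convex on the co-ordinates. Then f((a+b)/2, (c+d)/2) ≤ (1/2)[(1/(b-a)) ∫_a^b f(x, (c+d)/2) dx + (1/(d-c)) ∫_c^d f((a+b)/2, y) dy] ≤ (1/((b-a)(d-c))) ∫_a^b ∫_c^d f(x,y) dy dx. -/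
open MeasureTheory

/-- Left Hermite–Hadamard inequality for a convex function on `[a,b]`. -/
lemma hh_left (a b : ℝ) (hab : a < b) (g : ℝ → ℝ)
    (hg : ConvexOn ℝ (Set.Icc a b) g)
    (hgi : IntervalIntegrable g volume a b) :
    g ((a + b) / 2) ≤ (1 / (b - a)) * ∫ x in a..b, g x := by
  have hrefl : IntervalIntegrable (fun x => g (a + b - x)) volume a b := by
    have := hgi.comp_sub_left (a + b)
    simpa using this.symm
  have h1 : ∀ x ∈ Set.Icc a b, g ((a + b) / 2) ≤ (g x + g (a + b - x)) / 2 := by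
    intro x hx
    have hx' : a + b - x ∈ Set.Icc a b := ⟨by linarith [hx.2], by linarith [hx.1]⟩
    have := hg.2 hx hx' (by norm_num : (0:ℝ) ≤ 1/2) (by norm_num : (0:ℝ) ≤ 1/2)
      (by norm_num)
    have hmid : (1/2 : ℝ) • x + (1/2 : ℝ) • (a + b - x) = (a + b) / 2 := by
      simp [smul_eq_mul]; ring
    rw [hmid] at this
    simp only [smul_eq_mul] at this
    linarith
  have key : (b - a) * g ((a + b) / 2) ≤ ∫ x in a..b, (g x + g (a + b - x)) / 2 := by
    have := intervalIntegral.integral_mono_on hab.le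
      (intervalIntegrable_const (c := g ((a + b) / 2)))
      ((hgi.add hrefl).div_const 2) h1
    simpa using this
  have heq : (∫ x in a..b, (g x + g (a + b - x)) / 2) = ∫ x in a..b, g x := by
    rw [intervalIntegral.integral_div, intervalIntegral.integral_add hgi hrefl]
    have : (∫ x in a..b, g (a + b - x)) = ∫ x in a..b, g x := by
      have := intervalIntegral.integral_comp_sub_left (a := a) (b := b) g (a + b)
      simpa using this
    rw [this]; ring
  rw [heq] at key
  rw [div_mul_eq_mul_div, one_mul, le_div_iff₀ (by linarith)]
  linarith [key]

theorem stmt5 (a b c d : ℝ) (hab : a < b) (hcd : c < d) (f : ℝ → ℝ → ℝ)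
    (hf : CoordConvexOn a b c d f)
    (hint : IntegrableOn (fun p : ℝ × ℝ => f p.1 p.2) (Set.Icc a b ×ˢ Set.Icc c d))
    (hint1 : IntervalIntegrable (fun x => f x ((c + d) / 2)) volume a b)
    (hint2 : IntervalIntegrable (fun y => f ((a + b) / 2) y) volume c d) :
    f ((a + b) / 2) ((c + d) / 2) ≤
        (1 / 2) * ((1 / (b - a)) * (∫ x in a..b, f x ((c + d) / 2)) +
          (1 / (d - c)) * ∫ y in c..d, f ((a + b) / 2) y) ∧
      (1 / 2) * ((1 / (b - a)) * (∫ x in a..b, f x ((c + d) / 2)) +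
          (1 / (d - c)) * ∫ y in c..d, f ((a + b) / 2) y) ≤
        (1 / ((b - a) * (d - c))) * ∫ x in a..b, ∫ y in c..d, f x y := by
  have hba : (0:ℝ) < b - a := by linarith
  have hdc : (0:ℝ) < d - c := by linarith
  have hmid1 : (a + b) / 2 ∈ Set.Icc a b := ⟨by linarith, by linarith⟩
  have hmid2 : (c + d) / 2 ∈ Set.Icc c d := ⟨by linarith, by linarith⟩
  -- first inequality
  have h1 := hh_left a b hab (fun x => f x ((c + d) / 2)) (hf.1 _ hmid2) hint1
  have h2 := hh_left c d hcd (fun y => f ((a + b) / 2) y) (hf.2 _ hmid1) hint2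
  refine ⟨by linarith, ?_⟩
  -- second inequality
  set μ := volume.restrict (Set.Icc a b) with hμ
  set ν := volume.restrict (Set.Icc c d) with hν
  have hprod : Integrable (fun p : ℝ × ℝ => f p.1 p.2) (μ.prod ν) := by
    rw [hμ, hν, Measure.prod_restrict, ← Measure.volume_eq_prod]
    exact hint
  -- conversions between interval and set integrals
  have conv1 : ∀ g : ℝ → ℝ, (∫ x in a..b, g x) = ∫ x, g x ∂μ := by
    intro g
    rw [intervalIntegral.integral_of_le hab.le, hμ, ← integral_Icc_eq_integral_Ioc]
  have conv2 : ∀ g : ℝ → ℝ, (∫ y in c..d, g y) = ∫ y, g y ∂ν := by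
    intro g
    rw [intervalIntegral.integral_of_le hcd.le, hν, ← integral_Icc_eq_integral_Ioc]
  -- a.e. slice integrability
  have hae_x : ∀ᵐ x ∂μ, Integrable (fun y => f x y) ν := hprod.prod_right_ae
  have hae_y : ∀ᵐ y ∂ν, Integrable (fun x => f x y) μ := hprod.prod_left_ae
  have hmemx : ∀ᵐ x ∂μ, x ∈ Set.Icc a b := ae_restrict_mem measurableSet_Icc
  have hmemy : ∀ᵐ y ∂ν, y ∈ Set.Icc c d := ae_restrict_mem measurableSet_Icc
  -- pointwise (a.e.) Hermite–Hadamard in each variable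
  have hptx : ∀ᵐ x ∂μ, f x ((c + d) / 2) ≤ (1 / (d - c)) * ∫ y, f x y ∂ν := by
    filter_upwards [hae_x, hmemx] with x hix hx
    have hii : IntervalIntegrable (fun y => f x y) volume c d := by
      rw [intervalIntegrable_iff_integrableOn_Icc_of_le hcd.le]
      exact hix
    have := hh_left c d hcd (fun y => f x y) (hf.2 x hx) hii
    rwa [conv2 (fun y => f x y)] at this
  have hpty : ∀ᵐ y ∂ν, f ((a + b) / 2) y ≤ (1 / (b - a)) * ∫ x, f x y ∂μ := by
    filter_upwards [hae_y, hmemy] with y hiy hy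
    have hii : IntervalIntegrable (fun x => f x y) volume a b := by
      rw [intervalIntegrable_iff_integrableOn_Icc_of_le hab.le]
      exact hiy
    have := hh_left a b hab (fun x => f x y) (hf.1 y hy) hii
    rwa [conv1 (fun x => f x y)] at this
  -- integrability of inner integrals
  have hI : Integrable (fun x => ∫ y, f x y ∂ν) μ := hprod.integral_prod_left
  have hJ : Integrable (fun y => ∫ x, f x y ∂μ) ν := hprod.integral_prod_right
  have hA : Integrable (fun x => f x ((c + d) / 2)) μ := by
    rw [hμ]
    exact (intervalIntegrable_iff_integrableOn_Icc_of_le hab.le).mp hint1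
  have hB : Integrable (fun y => f ((a + b) / 2) y) ν := by
    rw [hν]
    exact (intervalIntegrable_iff_integrableOn_Icc_of_le hcd.le).mp hint2
  -- integrate the pointwise inequalities
  have hIA : (∫ x, f x ((c + d) / 2) ∂μ) ≤ ∫ x, (1 / (d - c)) * ∫ y, f x y ∂ν ∂μ :=
    integral_mono_ae hA (hI.const_mul _) hptx
  have hIB : (∫ y, f ((a + b) / 2) y ∂ν) ≤ ∫ y, (1 / (b - a)) * ∫ x, f x y ∂μ ∂ν :=
    integral_mono_ae hB (hJ.const_mul _) hpty
  rw [integral_const_mul] at hIA hIB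
  -- Fubini
  have hswap : (∫ y, ∫ x, f x y ∂μ ∂ν) = ∫ x, ∫ y, f x y ∂ν ∂μ := by
    have := integral_integral_swap (f := fun x y => f x y) hprod
    exact this.symm
  rw [hswap] at hIB
  -- rewrite the goal in terms of μ, ν
  have hD : (∫ x in a..b, ∫ y in c..d, f x y) = ∫ x, ∫ y, f x y ∂ν ∂μ := by
    rw [conv1 (fun x => ∫ y in c..d, f x y)]
    congr 1
    ext x
    exact conv2 (fun y => f x y)
  rw [hD, conv1 (fun x => f x ((c + d) / 2)), conv2 (fun y => f ((a + b) / 2) y)]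
  set A := ∫ x, f x ((c + d) / 2) ∂μ
  set B := ∫ y, f ((a + b) / 2) y ∂ν
  set D := ∫ x, ∫ y, f x y ∂ν ∂μ
  have e1 : (1 / (b - a)) * A ≤ (1 / ((b - a) * (d - c))) * D := by
    rw [div_mul_eq_mul_div, one_mul, div_mul_eq_mul_div, one_mul,
      div_le_div_iff₀ hba (by positivity)]
    have : A * (d - c) ≤ D := by
      rw [mul_comm]
      calc (d - c) * A ≤ (d - c) * ((1 / (d - c)) * D) := by
            apply mul_le_mul_of_nonneg_left hIA hdc.le
        _ = D := by field_simp
    nlinarith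
  have e2 : (1 / (d - c)) * B ≤ (1 / ((b - a) * (d - c))) * D := by
    rw [div_mul_eq_mul_div, one_mul, div_mul_eq_mul_div, one_mul,
      div_le_div_iff₀ hdc (by positivity)]
    have : B * (b - a) ≤ D := by
      rw [mul_comm]
      calc (b - a) * B ≤ (b - a) * ((1 / (b - a)) * D) := by
            apply mul_le_mul_of_nonneg_left hIB hba.le
        _ = D := by field_simp
    nlinarith
  linarith
end

section
/- Suppose f : [a,b] × [c,d] → ℝ is convex on the co-ordinates. Then (1/((b-a)(d-c))) ∫_a^b ∫_c^d f(x,y) dy dx ≤ (1/4)[(1/(b-a)) ∫_a^b f(x,c) dx + (1/(b-a)) ∫_a^b f(x,d) dx + (1/(d-c)) ∫_c^d f(a,y) dy + (1/(d-c)) ∫_c^d f(b,y) dy] ≤ (f(a,c)+f(a,d)+f(b,c)+f(b,d))/4. -/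
/-!
Everything reduces to the trapezoid half of the Hermite–Hadamard inequality,
`∫ x in a..b, g x ≤ (b - a) * (g a + g b) / 2` for convex `g`, which follows by integrating
`g x + g (a + b - x) ≤ g a + g b` and using that the reflection `x ↦ a + b - x` preserves the
integral. Applied to the inner integral in `y`, and, after Fubini, in `x`, it bounds the double
integral twice; averaging the two bounds gives the first inequality. Applied to the four edges of
the rectangle it gives the second.
-/

open MeasureTheory

open Set

theorem ConvexOn.apply_add_apply_reflect_le {f : ℝ → ℝ} {a b x : ℝ} (hf : ConvexOn ℝ (Icc a b) f)
    (hx : x ∈ Icc a b) : f x + f (a + b - x) ≤ f a + f b := by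
  have hab : a ≤ b := hx.1.trans hx.2
  rw [← segment_eq_Icc hab] at hx
  obtain ⟨s, t, hs, ht, hst, rfl⟩ := hx
  have ha : a ∈ Icc a b := left_mem_Icc.2 hab
  have hb : b ∈ Icc a b := right_mem_Icc.2 hab
  have hreflect : a + b - (s • a + t • b) = t • a + s • b := by
    simp only [smul_eq_mul]
    linear_combination -(a + b) * hst
  rw [hreflect]
  have hst' : t + s = 1 := by rw [add_comm, hst]
  have h₁ := hf.2 ha hb hs ht hst
  have h₂ := hf.2 ha hb ht hs hst'
  simp only [smul_eq_mul] at h₁ h₂ ⊢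
  linear_combination h₁ + h₂ + (f a + f b) * hst

theorem ConvexOn.intervalIntegral_le_trapezoid {f : ℝ → ℝ} {a b : ℝ} (hab : a ≤ b)
    (hf : ConvexOn ℝ (Icc a b) f) (hfi : IntervalIntegrable f volume a b) :
    ∫ x in a..b, f x ≤ (b - a) * (f a + f b) / 2 := by
  have hreflect : ∫ x in a..b, f (a + b - x) = ∫ x in a..b, f x := by simp
  have hreflect_int : IntervalIntegrable (fun x => f (a + b - x)) volume a b := by
    simpa using (hfi.comp_sub_left (a + b)).symm
  have hsum : ∫ x in a..b, (f x + f (a + b - x)) ≤ ∫ _ in a..b, (f a + f b) :=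
    intervalIntegral.integral_mono_on hab (hfi.add hreflect_int) intervalIntegrable_const
      fun x hx => hf.apply_add_apply_reflect_le hx
  rw [intervalIntegral.integral_add hfi hreflect_int, hreflect, intervalIntegral.integral_const,
    smul_eq_mul] at hsum
  linarith

theorem CoordConvexOn.swap {a b c d : ℝ} {f : ℝ → ℝ → ℝ} (hf : CoordConvexOn a b c d f) :
    CoordConvexOn c d a b fun y x => f x y :=
  ⟨hf.2, hf.1⟩

theorem CoordConvexOn.integral_integral_le_trapezoid {a b c d : ℝ} {f : ℝ → ℝ → ℝ}
    (hf : CoordConvexOn a b c d f) (hab : a ≤ b) (hcd : c ≤ d)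
    (hint : IntegrableOn (fun p : ℝ × ℝ => f p.1 p.2) (Icc a b ×ˢ Icc c d))
    (hic : IntervalIntegrable (fun x => f x c) volume a b)
    (hid : IntervalIntegrable (fun x => f x d) volume a b) :
    ∫ x in a..b, ∫ y in c..d, f x y ≤
      (d - c) * ((∫ x in a..b, f x c) + ∫ x in a..b, f x d) / 2 := by
  have hprod : Integrable (Function.uncurry f)
      ((volume.restrict (Ioc a b)).prod (volume.restrict (Ioc c d))) := by
    rw [Measure.prod_restrict]
    exact hint.mono_set (prod_mono Ioc_subset_Icc_self Ioc_subset_Icc_self)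
  have hrhs : (d - c) * ((∫ x in a..b, f x c) + ∫ x in a..b, f x d) / 2 =
      ∫ x in a..b, (d - c) * (f x c + f x d) / 2 := by
    rw [intervalIntegral.integral_div, intervalIntegral.integral_const_mul,
      intervalIntegral.integral_add hic hid]
  rw [hrhs, intervalIntegral.integral_of_le hab, intervalIntegral.integral_of_le hab]
  refine integral_mono_ae ?_ (((hic.add hid).const_mul _).div_const _).1 ?_
  · simpa only [intervalIntegral.integral_of_le hcd, Function.uncurry_apply_pair]
      using hprod.integral_prod_left
  filter_upwards [hprod.prod_right_ae, ae_restrict_mem measurableSet_Ioc] with x hx hxab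
  exact (hf.2 x (Ioc_subset_Icc_self hxab)).intervalIntegral_le_trapezoid hcd
    ((intervalIntegrable_iff_integrableOn_Ioc_of_le hcd).2 hx)

theorem stmt6 (a b c d : ℝ) (hab : a < b) (hcd : c < d) (f : ℝ → ℝ → ℝ)
    (hf : CoordConvexOn a b c d f)
    (hint : IntegrableOn (fun p : ℝ × ℝ => f p.1 p.2) (Set.Icc a b ×ˢ Set.Icc c d))
    (hic : IntervalIntegrable (fun x => f x c) volume a b)
    (hid : IntervalIntegrable (fun x => f x d) volume a b)
    (hia : IntervalIntegrable (fun y => f a y) volume c d)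
    (hib : IntervalIntegrable (fun y => f b y) volume c d) :
    (1 / ((b - a) * (d - c))) * (∫ x in a..b, ∫ y in c..d, f x y) ≤
        (1 / 4) * ((1 / (b - a)) * (∫ x in a..b, f x c) +
          (1 / (b - a)) * (∫ x in a..b, f x d) +
          (1 / (d - c)) * (∫ y in c..d, f a y) +
          (1 / (d - c)) * ∫ y in c..d, f b y) ∧
      (1 / 4) * ((1 / (b - a)) * (∫ x in a..b, f x c) +
          (1 / (b - a)) * (∫ x in a..b, f x d) +
          (1 / (d - c)) * (∫ y in c..d, f a y) +
          (1 / (d - c)) * ∫ y in c..d, f b y) ≤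
        (f a c + f a d + f b c + f b d) / 4 := by
  have hba : 0 < b - a := sub_pos.2 hab
  have hdc : 0 < d - c := sub_pos.2 hcd
  have hx := hf.integral_integral_le_trapezoid hab.le hcd.le hint hic hid
  have hy := hf.swap.integral_integral_le_trapezoid hcd.le hab.le hint.swap hia hib
  have hint' : IntegrableOn (Function.uncurry f) (uIoc a b ×ˢ uIoc c d) := by
    rw [uIoc_of_le hab.le, uIoc_of_le hcd.le]
    exact hint.mono_set (prod_mono Ioc_subset_Icc_self Ioc_subset_Icc_self)
  rw [← intervalIntegral_intervalIntegral_swap hint'] at hy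
  have hc := (hf.1 c (left_mem_Icc.2 hcd.le)).intervalIntegral_le_trapezoid hab.le hic
  have hd := (hf.1 d (right_mem_Icc.2 hcd.le)).intervalIntegral_le_trapezoid hab.le hid
  have ha := (hf.2 a (left_mem_Icc.2 hab.le)).intervalIntegral_le_trapezoid hcd.le hia
  have hb := (hf.2 b (right_mem_Icc.2 hab.le)).intervalIntegral_le_trapezoid hcd.le hib
  constructor
  · field_simp
    linarith
  · field_simp
    linarith [mul_le_mul_of_nonneg_left hc hdc.le, mul_le_mul_of_nonneg_left hd hdc.le,
      mul_le_mul_of_nonneg_left ha hba.le, mul_le_mul_of_nonneg_left hb hba.le]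
end

section
/- Let f : [a,b] × [c,d] → ℝ be co-ordinated convex and p : [a,b] × [c,d] → ℝ be positive, integrable and symmetric about x = (a+b)/2 and y = (c+d)/2. Then f((a+b)/2, (c+d)/2) ≤ (∫∫ f(x,y) p(x,y) dy dx)/(∫∫ p(x,y) dy dx) ≤ (f(a,c)+f(a,d)+f(b,c)+f(b,d))/4. -/
open MeasureTheory

noncomputable def reflME (k : ℝ) : ℝ ≃ᵐ ℝ :=
  { toFun := fun x => k - x
    invFun := fun x => k - x
    left_inv := fun x => by simp
    right_inv := fun x => by simp
    measurable_toFun := measurable_const.sub measurable_id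
    measurable_invFun := measurable_const.sub measurable_id }

lemma reflME_mp (k : ℝ) : MeasurePreserving (reflME k) volume volume :=
  Measure.measurePreserving_sub_left volume k

lemma reflME_idmp : MeasurePreserving (MeasurableEquiv.refl ℝ) volume volume :=
  MeasurePreserving.id volume

lemma refl_setIntegral (e : (ℝ × ℝ) ≃ᵐ (ℝ × ℝ)) (hmp : MeasurePreserving e volume volume)
    (S : Set (ℝ × ℝ)) (hS : e ⁻¹' S = S) (g : ℝ × ℝ → ℝ) :
    ∫ q in S, g (e q) = ∫ q in S, g q := by
  have := hmp.setIntegral_preimage_emb e.measurableEmbedding g S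
  rwa [hS] at this

lemma refl_integrableOn (e : (ℝ × ℝ) ≃ᵐ (ℝ × ℝ)) (hmp : MeasurePreserving e volume volume)
    (S : Set (ℝ × ℝ)) (hS : e ⁻¹' S = S) (g : ℝ × ℝ → ℝ) (hg : IntegrableOn g S) :
    IntegrableOn (g ∘ e) S := by
  have := (hmp.integrableOn_comp_preimage e.measurableEmbedding (f := g) (s := S)).mpr hg
  rwa [hS] at this

lemma iter_eq_prod (a b c d : ℝ) (hab : a ≤ b) (hcd : c ≤ d) (g : ℝ × ℝ → ℝ)
    (hg : IntegrableOn g (Set.Icc a b ×ˢ Set.Icc c d)) :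
    ∫ x in a..b, ∫ y in c..d, g (x, y) = ∫ q in Set.Icc a b ×ˢ Set.Icc c d, g q := by
  have h1 : ∀ x, (∫ y in c..d, g (x, y)) = ∫ y in Set.Icc c d, g (x, y) := by
    intro x
    rw [intervalIntegral.integral_of_le hcd, ← integral_Icc_eq_integral_Ioc]
  rw [intervalIntegral.integral_of_le hab, ← integral_Icc_eq_integral_Ioc]
  simp_rw [h1]
  rw [Measure.volume_eq_prod] at hg ⊢
  exact (setIntegral_prod g hg).symm

theorem stmt7 (a b c d : ℝ) (hab : a < b) (hcd : c < d) (f p : ℝ → ℝ → ℝ)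
    (hf : CoordConvexOn a b c d f)
    (hp_pos : ∀ x ∈ Set.Icc a b, ∀ y ∈ Set.Icc c d, 0 < p x y)
    (hp_int : IntegrableOn (fun q : ℝ × ℝ => p q.1 q.2) (Set.Icc a b ×ˢ Set.Icc c d))
    (hfp_int : IntegrableOn (fun q : ℝ × ℝ => f q.1 q.2 * p q.1 q.2)
        (Set.Icc a b ×ˢ Set.Icc c d))
    (hp_symx : ∀ x ∈ Set.Icc a b, ∀ y ∈ Set.Icc c d, p (a + b - x) y = p x y)
    (hp_symy : ∀ x ∈ Set.Icc a b, ∀ y ∈ Set.Icc c d, p x (c + d - y) = p x y) :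
    f ((a + b) / 2) ((c + d) / 2) ≤
        (∫ x in a..b, ∫ y in c..d, f x y * p x y) /
          (∫ x in a..b, ∫ y in c..d, p x y) ∧
      (∫ x in a..b, ∫ y in c..d, f x y * p x y) /
          (∫ x in a..b, ∫ y in c..d, p x y) ≤
        (f a c + f a d + f b c + f b d) / 4 := by
  obtain ⟨hf1, hf2⟩ := hf
  set S : Set (ℝ × ℝ) := Set.Icc a b ×ˢ Set.Icc c d with hSdef
  have hSm : MeasurableSet S := measurableSet_Icc.prod measurableSet_Icc
  set fp : ℝ × ℝ → ℝ := fun q => f q.1 q.2 * p q.1 q.2 with hfpdef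
  set pp : ℝ × ℝ → ℝ := fun q => p q.1 q.2 with hppdef
  set F : ℝ := ∫ q in S, fp q with hFdef
  set P : ℝ := ∫ q in S, pp q with hPdef
  -- reflections
  set e1 : (ℝ × ℝ) ≃ᵐ (ℝ × ℝ) := (reflME (a + b)).prodCongr (MeasurableEquiv.refl ℝ) with he1
  set e2 : (ℝ × ℝ) ≃ᵐ (ℝ × ℝ) := (MeasurableEquiv.refl ℝ).prodCongr (reflME (c + d)) with he2
  set e3 : (ℝ × ℝ) ≃ᵐ (ℝ × ℝ) := (reflME (a + b)).prodCongr (reflME (c + d)) with he3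
  have he1a : ∀ q : ℝ × ℝ, e1 q = (a + b - q.1, q.2) := fun q => rfl
  have he2a : ∀ q : ℝ × ℝ, e2 q = (q.1, c + d - q.2) := fun q => rfl
  have he3a : ∀ q : ℝ × ℝ, e3 q = (a + b - q.1, c + d - q.2) := fun q => rfl
  have hmp1 : MeasurePreserving e1 volume volume := by
    rw [Measure.volume_eq_prod]; exact (reflME_mp _).prod reflME_idmp
  have hmp2 : MeasurePreserving e2 volume volume := by
    rw [Measure.volume_eq_prod]; exact reflME_idmp.prod (reflME_mp _)
  have hmp3 : MeasurePreserving e3 volume volume := by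
    rw [Measure.volume_eq_prod]; exact (reflME_mp _).prod (reflME_mp _)
  have hpre1 : e1 ⁻¹' S = S := by
    ext ⟨x, y⟩
    simp only [Set.mem_preimage, he1a, hSdef, Set.mem_prod, Set.mem_Icc]
    constructor <;> rintro ⟨⟨h1, h2⟩, h3⟩ <;> exact ⟨⟨by linarith, by linarith⟩, h3⟩
  have hpre2 : e2 ⁻¹' S = S := by
    ext ⟨x, y⟩
    simp only [Set.mem_preimage, he2a, hSdef, Set.mem_prod, Set.mem_Icc]
    constructor <;> rintro ⟨h3, ⟨h1, h2⟩⟩ <;> exact ⟨h3, ⟨by linarith, by linarith⟩⟩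
  have hpre3 : e3 ⁻¹' S = S := by
    ext ⟨x, y⟩
    simp only [Set.mem_preimage, he3a, hSdef, Set.mem_prod, Set.mem_Icc]
    constructor <;> rintro ⟨⟨h1, h2⟩, ⟨h3, h4⟩⟩ <;>
      exact ⟨⟨by linarith, by linarith⟩, ⟨by linarith, by linarith⟩⟩
  -- membership helpers
  have hmemS : ∀ q : ℝ × ℝ, q ∈ S → q.1 ∈ Set.Icc a b ∧ q.2 ∈ Set.Icc c d := by
    intro q hq; exact ⟨hq.1, hq.2⟩
  have hx' : ∀ x ∈ Set.Icc a b, a + b - x ∈ Set.Icc a b := by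
    intro x hx; rw [Set.mem_Icc] at hx ⊢; constructor <;> linarith [hx.1, hx.2]
  have hy' : ∀ y ∈ Set.Icc c d, c + d - y ∈ Set.Icc c d := by
    intro y hy; rw [Set.mem_Icc] at hy ⊢; constructor <;> linarith [hy.1, hy.2]
  -- p symmetry at reflections
  have hp3 : ∀ q ∈ S, p (a + b - q.1) (c + d - q.2) = p q.1 q.2 := by
    intro q hq
    rw [hp_symy _ (hx' _ hq.1) _ hq.2, hp_symx _ hq.1 _ hq.2]
  -- positivity of P
  have hPpos : 0 < P := by
    rw [hPdef]
    rw [setIntegral_pos_iff_support_of_nonneg_ae ?hnn hp_int]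
    case hnn =>
      filter_upwards [ae_restrict_mem hSm] with q hq
      exact (hp_pos _ hq.1 _ hq.2).le
    · refine lt_of_lt_of_le ?_ (measure_mono (fun q hq => ⟨?_, hq⟩))
      · rw [hSdef, Measure.volume_eq_prod, Measure.prod_prod, Real.volume_Icc, Real.volume_Icc]
        rw [← ENNReal.ofReal_mul (by linarith)]
        exact ENNReal.ofReal_pos.mpr (by nlinarith)
      · exact ne_of_gt (hp_pos _ hq.1 _ hq.2)
  -- lower bound: f m n * P ≤ F
  set m : ℝ := (a + b) / 2 with hmdef
  set n : ℝ := (c + d) / 2 with hndef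
  have hmmem : m ∈ Set.Icc a b := by rw [Set.mem_Icc]; constructor <;> [linarith; linarith]
  have hnmem : n ∈ Set.Icc c d := by rw [Set.mem_Icc]; constructor <;> [linarith; linarith]
  set g1 : ℝ × ℝ → ℝ := fun q => f (a + b - q.1) q.2 * p q.1 q.2 with hg1def
  set g2 : ℝ × ℝ → ℝ := fun q => f q.1 (c + d - q.2) * p q.1 q.2 with hg2def
  set g3 : ℝ × ℝ → ℝ := fun q => f (a + b - q.1) (c + d - q.2) * p q.1 q.2 with hg3def
  have heq1 : Set.EqOn (fp ∘ e1) g1 S := by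
    intro q hq
    simp only [Function.comp_apply, he1a, hfpdef, hg1def]
    rw [hp_symx _ hq.1 _ hq.2]
  have heq2 : Set.EqOn (fp ∘ e2) g2 S := by
    intro q hq
    simp only [Function.comp_apply, he2a, hfpdef, hg2def]
    rw [hp_symy _ hq.1 _ hq.2]
  have heq3 : Set.EqOn (fp ∘ e3) g3 S := by
    intro q hq
    simp only [Function.comp_apply, he3a, hfpdef, hg3def]
    rw [hp3 q hq]
  have hint1 : IntegrableOn g1 S :=
    ((refl_integrableOn e1 hmp1 S hpre1 fp hfp_int).congr_fun heq1 hSm)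
  have hint2 : IntegrableOn g2 S :=
    ((refl_integrableOn e2 hmp2 S hpre2 fp hfp_int).congr_fun heq2 hSm)
  have hint3 : IntegrableOn g3 S :=
    ((refl_integrableOn e3 hmp3 S hpre3 fp hfp_int).congr_fun heq3 hSm)
  have hIg1 : ∫ q in S, g1 q = F := by
    rw [← setIntegral_congr_fun hSm heq1]
    exact refl_setIntegral e1 hmp1 S hpre1 fp
  have hIg2 : ∫ q in S, g2 q = F := by
    rw [← setIntegral_congr_fun hSm heq2]
    exact refl_setIntegral e2 hmp2 S hpre2 fp
  have hIg3 : ∫ q in S, g3 q = F := by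
    rw [← setIntegral_congr_fun hSm heq3]
    exact refl_setIntegral e3 hmp3 S hpre3 fp
  have hlow : f m n * P ≤ F := by
    have hmono : (∫ q in S, f m n * pp q) ≤ ∫ q in S, (fp q + g1 q + g2 q + g3 q) / 4 := by
      apply setIntegral_mono_on (hp_int.const_mul _)
        (((hfp_int.add hint1).add hint2).add hint3 |>.div_const 4) hSm
      rintro ⟨x, y⟩ hq
      obtain ⟨hx, hy⟩ := hmemS _ hq
      have hxx : a + b - x ∈ Set.Icc a b := hx' _ hx
      have hyy : c + d - y ∈ Set.Icc c d := hy' _ hy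
      have hppos := (hp_pos _ hx _ hy).le
      have key : f m n ≤ (f x y + f (a + b - x) y + f x (c + d - y)
          + f (a + b - x) (c + d - y)) / 4 := by
        have h0 : (0:ℝ) ≤ 1/2 := by norm_num
        have hs : (1:ℝ)/2 + 1/2 = 1 := by norm_num
        have c1 := (hf1 n hnmem).2 hx hxx h0 h0 hs
        have c2 := (hf2 x hx).2 hy hyy h0 h0 hs
        have c3 := (hf2 _ hxx).2 hy hyy h0 h0 hs
        simp only [smul_eq_mul] at c1 c2 c3
        have e1' : (1:ℝ)/2 * x + 1/2 * (a + b - x) = m := by rw [hmdef]; ring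
        have e2' : (1:ℝ)/2 * y + 1/2 * (c + d - y) = n := by rw [hndef]; ring
        rw [e1'] at c1
        rw [e2'] at c2 c3
        linarith
      calc f m n * pp (x, y) ≤ ((f x y + f (a + b - x) y + f x (c + d - y)
            + f (a + b - x) (c + d - y)) / 4) * pp (x, y) :=
            mul_le_mul_of_nonneg_right key hppos
        _ = (fp (x, y) + g1 (x, y) + g2 (x, y) + g3 (x, y)) / 4 := by
            simp only [hfpdef, hg1def, hg2def, hg3def, hppdef]; ring
    have h12 : IntegrableOn (fun q => fp q + g1 q) S := hfp_int.add hint1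
    have h123 : IntegrableOn (fun q => fp q + g1 q + g2 q) S := h12.add hint2
    rw [integral_const_mul, integral_div, integral_add h123 hint3,
      integral_add h12 hint2, integral_add hfp_int hint1,
      hIg1, hIg2, hIg3, ← hFdef, ← hPdef] at hmono
    linarith
    -- upper bound
  have hba : (0:ℝ) < b - a := by linarith
  have hdc : (0:ℝ) < d - c := by linarith
  set t : ℝ → ℝ := fun x => (b - x) / (b - a) with htdef
  set s : ℝ → ℝ := fun y => (d - y) / (d - c) with hsdef
  have ht01 : ∀ x ∈ Set.Icc a b, 0 ≤ t x ∧ t x ≤ 1 := by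
    intro x hx; rw [Set.mem_Icc] at hx
    constructor
    · exact div_nonneg (by linarith) hba.le
    · rw [div_le_one hba]; linarith
  have hs01 : ∀ y ∈ Set.Icc c d, 0 ≤ s y ∧ s y ≤ 1 := by
    intro y hy; rw [Set.mem_Icc] at hy
    constructor
    · exact div_nonneg (by linarith) hdc.le
    · rw [div_le_one hdc]; linarith
  have htrefl : ∀ x, t (a + b - x) = 1 - t x := by
    intro x; rw [htdef]; field_simp; ring
  have hsrefl : ∀ y, s (c + d - y) = 1 - s y := by
    intro y; rw [hsdef]; field_simp; ring
  have htcont : Continuous t := (continuous_const.sub continuous_id).div_const _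
  have hscont : Continuous s := (continuous_const.sub continuous_id).div_const _
  set w1 : ℝ × ℝ → ℝ := fun q => t q.1 * s q.2 * pp q with hw1def
  set w2 : ℝ × ℝ → ℝ := fun q => t q.1 * (1 - s q.2) * pp q with hw2def
  set w3 : ℝ × ℝ → ℝ := fun q => (1 - t q.1) * s q.2 * pp q with hw3def
  set w4 : ℝ × ℝ → ℝ := fun q => (1 - t q.1) * (1 - s q.2) * pp q with hw4def
  have hpm : AEStronglyMeasurable pp (volume.restrict S) := hp_int.aestronglyMeasurable
  have hwint : ∀ φ : ℝ × ℝ → ℝ, Continuous φ → (∀ q ∈ S, |φ q| ≤ 1) →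
      IntegrableOn (fun q => φ q * pp q) S := by
    intro φ hc hb1
    refine Integrable.mono hp_int (hc.aestronglyMeasurable.mul hpm) ?_
    filter_upwards [ae_restrict_mem hSm] with q hq
    rw [norm_mul]
    calc ‖φ q‖ * ‖pp q‖ ≤ 1 * ‖pp q‖ :=
          mul_le_mul_of_nonneg_right (by rw [Real.norm_eq_abs]; exact hb1 q hq) (norm_nonneg _)
      _ = ‖pp q‖ := one_mul _
  have habs : ∀ u v : ℝ, 0 ≤ u → u ≤ 1 → 0 ≤ v → v ≤ 1 → |u * v| ≤ 1 := by
    intro u v h1 h2 h3 h4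
    rw [abs_mul, abs_of_nonneg h1, abs_of_nonneg h3]
    nlinarith
  have hw1int : IntegrableOn w1 S := by
    refine hwint (fun q => t q.1 * s q.2)
      ((htcont.comp continuous_fst).mul (hscont.comp continuous_snd)) ?_
    intro q hq
    exact habs _ _ (ht01 _ hq.1).1 (ht01 _ hq.1).2 (hs01 _ hq.2).1 (hs01 _ hq.2).2
  have hw2int : IntegrableOn w2 S := by
    refine hwint (fun q => t q.1 * (1 - s q.2))
      ((htcont.comp continuous_fst).mul (continuous_const.sub (hscont.comp continuous_snd))) ?_
    intro q hq
    exact habs _ _ (ht01 _ hq.1).1 (ht01 _ hq.1).2 (by linarith [(hs01 _ hq.2).2])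
      (by linarith [(hs01 _ hq.2).1])
  have hw3int : IntegrableOn w3 S := by
    refine hwint (fun q => (1 - t q.1) * s q.2)
      ((continuous_const.sub (htcont.comp continuous_fst)).mul (hscont.comp continuous_snd)) ?_
    intro q hq
    exact habs _ _ (by linarith [(ht01 _ hq.1).2]) (by linarith [(ht01 _ hq.1).1])
      (hs01 _ hq.2).1 (hs01 _ hq.2).2
  have hw4int : IntegrableOn w4 S := by
    refine hwint (fun q => (1 - t q.1) * (1 - s q.2))
      ((continuous_const.sub (htcont.comp continuous_fst)).mul
        (continuous_const.sub (hscont.comp continuous_snd))) ?_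
    intro q hq
    exact habs _ _ (by linarith [(ht01 _ hq.1).2]) (by linarith [(ht01 _ hq.1).1])
      (by linarith [(hs01 _ hq.2).2]) (by linarith [(hs01 _ hq.2).1])
  -- weight integral equalities
  have hI31 : ∫ q in S, w3 q = ∫ q in S, w1 q := by
    have heq : Set.EqOn (w1 ∘ e1) w3 S := by
      intro q hq
      simp only [Function.comp_apply, he1a, hw1def, hw3def, hppdef]
      rw [htrefl, hp_symx _ hq.1 _ hq.2]
    rw [← setIntegral_congr_fun hSm heq]
    exact refl_setIntegral e1 hmp1 S hpre1 w1
  have hI42 : ∫ q in S, w4 q = ∫ q in S, w2 q := by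
    have heq : Set.EqOn (w2 ∘ e1) w4 S := by
      intro q hq
      simp only [Function.comp_apply, he1a, hw2def, hw4def, hppdef]
      rw [htrefl, hp_symx _ hq.1 _ hq.2]
    rw [← setIntegral_congr_fun hSm heq]
    exact refl_setIntegral e1 hmp1 S hpre1 w2
  have hI21 : ∫ q in S, w2 q = ∫ q in S, w1 q := by
    have heq : Set.EqOn (w1 ∘ e2) w2 S := by
      intro q hq
      simp only [Function.comp_apply, he2a, hw1def, hw2def, hppdef]
      rw [hsrefl, hp_symy _ hq.1 _ hq.2]
    rw [← setIntegral_congr_fun hSm heq]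
    exact refl_setIntegral e2 hmp2 S hpre2 w1
  have hws12 : IntegrableOn (fun q => w1 q + w2 q) S := hw1int.add hw2int
  have hws123 : IntegrableOn (fun q => w1 q + w2 q + w3 q) S := hws12.add hw3int
  have hsumP : (∫ q in S, w1 q) + (∫ q in S, w2 q) + (∫ q in S, w3 q) + (∫ q in S, w4 q)
      = P := by
    have hptw : (fun q : ℝ × ℝ => w1 q + w2 q + w3 q + w4 q) = pp := by
      funext q
      simp only [hw1def, hw2def, hw3def, hw4def]
      ring
    have : ∫ q in S, (w1 q + w2 q + w3 q + w4 q) = P := by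
      rw [hptw]
    rw [integral_add hws123 hw4int, integral_add hws12 hw3int,
      integral_add hw1int hw2int] at this
    linarith
  have hq1 : ∫ q in S, w1 q = P / 4 := by linarith
  have hq2 : ∫ q in S, w2 q = P / 4 := by linarith
  have hq3 : ∫ q in S, w3 q = P / 4 := by linarith
  have hq4 : ∫ q in S, w4 q = P / 4 := by linarith
  -- pointwise upper bound and integration
  have haU : a ∈ Set.Icc a b := Set.left_mem_Icc.mpr hab.le
  have hbU : b ∈ Set.Icc a b := Set.right_mem_Icc.mpr hab.le
  have hcU : c ∈ Set.Icc c d := Set.left_mem_Icc.mpr hcd.le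
  have hdU : d ∈ Set.Icc c d := Set.right_mem_Icc.mpr hcd.le
  have hr1 : IntegrableOn (fun q => f a c * w1 q) S := hw1int.const_mul _
  have hr2 : IntegrableOn (fun q => f a d * w2 q) S := hw2int.const_mul _
  have hr3 : IntegrableOn (fun q => f b c * w3 q) S := hw3int.const_mul _
  have hr4 : IntegrableOn (fun q => f b d * w4 q) S := hw4int.const_mul _
  have hr12 : IntegrableOn (fun q => f a c * w1 q + f a d * w2 q) S := hr1.add hr2
  have hr123 : IntegrableOn (fun q => f a c * w1 q + f a d * w2 q + f b c * w3 q) S :=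
    hr12.add hr3
  have hup : F ≤ (f a c + f a d + f b c + f b d) * (P / 4) := by
    have hmono2 : F ≤ ∫ q in S,
        (f a c * w1 q + f a d * w2 q + f b c * w3 q + f b d * w4 q) := by
      rw [hFdef]
      have hrAll : IntegrableOn (fun q => f a c * w1 q + f a d * w2 q + f b c * w3 q
          + f b d * w4 q) S := hr123.add hr4
      apply setIntegral_mono_on hfp_int hrAll hSm
      rintro ⟨x, y⟩ hq
      obtain ⟨hx, hy⟩ := hmemS _ hq
      have ht0 : 0 ≤ t x := (ht01 _ hx).1
      have ht1 : t x ≤ 1 := (ht01 _ hx).2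
      have hs0 : 0 ≤ s y := (hs01 _ hy).1
      have hs1 : s y ≤ 1 := (hs01 _ hy).2
      have hppos : 0 ≤ p x y := (hp_pos _ hx _ hy).le
      have hxeq : t x • a + (1 - t x) • b = x := by
        simp only [smul_eq_mul, htdef]
        field_simp
        ring
      have hyeq : s y • c + (1 - s y) • d = y := by
        simp only [smul_eq_mul, hsdef]
        field_simp
        ring
      have h1 := (hf1 y hy).2 haU hbU (show (0:ℝ) ≤ t x from ht0)
        (show (0:ℝ) ≤ 1 - t x by linarith) (show t x + (1 - t x) = 1 by ring)
      rw [hxeq] at h1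
      have h2 := (hf2 a haU).2 hcU hdU (show (0:ℝ) ≤ s y from hs0)
        (show (0:ℝ) ≤ 1 - s y by linarith) (show s y + (1 - s y) = 1 by ring)
      rw [hyeq] at h2
      have h3 := (hf2 b hbU).2 hcU hdU (show (0:ℝ) ≤ s y from hs0)
        (show (0:ℝ) ≤ 1 - s y by linarith) (show s y + (1 - s y) = 1 by ring)
      rw [hyeq] at h3
      simp only [smul_eq_mul] at h1 h2 h3
      have key : f x y ≤ f a c * (t x * s y) + f a d * (t x * (1 - s y))
          + f b c * ((1 - t x) * s y) + f b d * ((1 - t x) * (1 - s y)) := by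
        calc f x y ≤ t x * f a y + (1 - t x) * f b y := h1
          _ ≤ t x * (s y * f a c + (1 - s y) * f a d)
              + (1 - t x) * (s y * f b c + (1 - s y) * f b d) :=
            add_le_add (mul_le_mul_of_nonneg_left h2 ht0)
              (mul_le_mul_of_nonneg_left h3 (by linarith))
          _ = _ := by ring
      calc fp (x, y) = f x y * pp (x, y) := rfl
        _ ≤ (f a c * (t x * s y) + f a d * (t x * (1 - s y))
            + f b c * ((1 - t x) * s y) + f b d * ((1 - t x) * (1 - s y))) * pp (x, y) :=
          mul_le_mul_of_nonneg_right key hppos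
        _ = f a c * w1 (x, y) + f a d * w2 (x, y) + f b c * w3 (x, y)
            + f b d * w4 (x, y) := by
          simp only [hw1def, hw2def, hw3def, hw4def]
          ring
    rw [integral_add hr123 hr4, integral_add hr12 hr3, integral_add hr1 hr2,
      integral_const_mul, integral_const_mul, integral_const_mul, integral_const_mul,
      hq1, hq2, hq3, hq4] at hmono2
    linarith
  -- conclusion
  have hFe : (∫ x in a..b, ∫ y in c..d, f x y * p x y) = F := by
    rw [hFdef]
    exact iter_eq_prod a b c d hab.le hcd.le fp hfp_int
  have hPe : (∫ x in a..b, ∫ y in c..d, p x y) = P := by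
    rw [hPdef]
    exact iter_eq_prod a b c d hab.le hcd.le pp hp_int
  rw [hFe, hPe]
  constructor
  · rw [le_div_iff₀ hPpos]
    exact hlow
  · rw [div_le_iff₀ hPpos]
    have : (f a c + f a d + f b c + f b d) * (P / 4)
        = (f a c + f a d + f b c + f b d) / 4 * P := by ring
    linarith
end

section
/- Suppose f : Δ = [a,b] × [c,d] → ℝ is convex on the co-ordinates and integrable, and define H(t,s) = (1/((b-a)(d-c))) ∫_a^b ∫_c^d f(tx + (1-t)(a+b)/2, sy + (1-s)(c+d)/2) dx dy for (t,s) ∈ [0,1]². Then H is convex on the co-ordinates on [0,1]². -/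
/-!
For fixed `x, y` the point `t * x + (1 - t) * (a + b) / 2` depends affinely on `t` and stays in
`[a, b]`, so `t ↦ f (...) (...)` is convex; integrating against `dx dy` preserves convexity, and
likewise in `s`. All slices are integrable because a convex function on a compact interval is
bounded and continuous on its interior.
-/

open MeasureTheory

/-- The Dragomir mapping `H` associated to `f` on `[a,b] × [c,d]`. -/
noncomputable def Hmap (a b c d : ℝ) (f : ℝ → ℝ → ℝ) (t s : ℝ) : ℝ :=
  (1 / ((b - a) * (d - c))) *
    ∫ x in a..b, ∫ y in c..d,
      f (t * x + (1 - t) * (a + b) / 2) (s * y + (1 - s) * (c + d) / 2)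

open Set

lemma ConvexOn.exists_forall_norm_le_of_Icc {g : ℝ → ℝ} {p q : ℝ}
    (hg : ConvexOn ℝ (Icc p q) g) : ∃ C, ∀ y ∈ Icc p q, ‖g y‖ ≤ C := by
  set M := max (g p) (g q)
  refine ⟨max M (M - 2 * g ((p + q) / 2)), fun y hy => ?_⟩
  have hpq : p ≤ q := hy.1.trans hy.2
  have hp : p ∈ Icc p q := left_mem_Icc.2 hpq
  have hq : q ∈ Icc p q := right_mem_Icc.2 hpq
  have hy' : p + q - y ∈ Icc p q := ⟨by linarith [hy.2], by linarith [hy.1]⟩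
  have hup : g y ≤ M := hg.le_max_of_mem_Icc hp hq hy
  have hup' : g (p + q - y) ≤ M := hg.le_max_of_mem_Icc hp hq hy'
  -- below, through the midpoint of `y` and its reflection `p + q - y`
  have hmid : g ((p + q) / 2) ≤ 2⁻¹ * g y + 2⁻¹ * g (p + q - y) := by
    have := hg.2 hy hy' (by norm_num : (0 : ℝ) ≤ 2⁻¹) (by norm_num : (0 : ℝ) ≤ 2⁻¹) (by norm_num)
    rwa [smul_eq_mul, smul_eq_mul, ← mul_add, add_sub_cancel, inv_mul_eq_div] at this
  rw [Real.norm_eq_abs, abs_le]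
  exact ⟨by linarith [le_max_right M (M - 2 * g ((p + q) / 2))], hup.trans (le_max_left _ _)⟩

lemma ConvexOn.intervalIntegrable_s13 {g : ℝ → ℝ} {p q : ℝ} (hpq : p ≤ q)
    (hg : ConvexOn ℝ (Icc p q) g) : IntervalIntegrable g volume p q := by
  rw [intervalIntegrable_iff_integrableOn_Icc_of_le hpq, integrableOn_Icc_iff_integrableOn_Ioo]
  obtain ⟨C, hC⟩ := hg.exists_forall_norm_le_of_Icc
  have hcont : ContinuousOn g (Ioo p q) := by
    simpa using hg.continuousOn_interior
  refine .of_bound measure_Ioo_lt_top (hcont.aestronglyMeasurable measurableSet_Ioo) C ?_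
  exact (ae_restrict_iff' measurableSet_Ioo).2
    (.of_forall fun y hy => hC y (Ioo_subset_Icc_self hy))

lemma convexOn_intervalIntegral {E : Type*} [AddCommGroup E] [Module ℝ E] {s : Set E}
    (hs : Convex ℝ s) {c d : ℝ} (hcd : c ≤ d) {g : E → ℝ → ℝ}
    (hconv : ∀ y ∈ Icc c d, ConvexOn ℝ s (fun x => g x y))
    (hint : ∀ x ∈ s, IntervalIntegrable (g x) volume c d) :
    ConvexOn ℝ s (fun x => ∫ y in c..d, g x y) := by
  refine ⟨hs, fun x₁ h₁ x₂ h₂ α β hα hβ hαβ => ?_⟩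
  simp only [smul_eq_mul]
  calc ∫ y in c..d, g (α • x₁ + β • x₂) y
      ≤ ∫ y in c..d, (α * g x₁ y + β * g x₂ y) :=
        intervalIntegral.integral_mono_on hcd (hint _ (hs h₁ h₂ hα hβ hαβ))
          (((hint x₁ h₁).const_mul α).add ((hint x₂ h₂).const_mul β))
          fun y hy => (hconv y hy).2 h₁ h₂ hα hβ hαβ
    _ = α * (∫ y in c..d, g x₁ y) + β * ∫ y in c..d, g x₂ y := by
        rw [intervalIntegral.integral_add ((hint x₁ h₁).const_mul α) ((hint x₂ h₂).const_mul β),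
          intervalIntegral.integral_const_mul, intervalIntegral.integral_const_mul]

lemma convexOn_intervalIntegral_intervalIntegral {E : Type*} [AddCommGroup E] [Module ℝ E]
    {P : Set E} (hP : Convex ℝ P) {a b c d : ℝ} (hab : a ≤ b) (hcd : c ≤ d)
    {F : E → ℝ → ℝ → ℝ}
    (hp : ∀ x ∈ Icc a b, ∀ y ∈ Icc c d, ConvexOn ℝ P (fun p => F p x y))
    (hx : ∀ p ∈ P, ∀ y ∈ Icc c d, ConvexOn ℝ (Icc a b) (fun x => F p x y))
    (hy : ∀ p ∈ P, ∀ x ∈ Icc a b, ConvexOn ℝ (Icc c d) (F p x)) :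
    ConvexOn ℝ P (fun p => ∫ x in a..b, ∫ y in c..d, F p x y) := by
  have hint_y : ∀ p ∈ P, ∀ x ∈ Icc a b, IntervalIntegrable (F p x) volume c d :=
    fun p hp x hx => (hy p hp x hx).intervalIntegrable_s13 hcd
  have hint_x : ∀ p ∈ P, IntervalIntegrable (fun x => ∫ y in c..d, F p x y) volume a b :=
    fun p hp => (convexOn_intervalIntegral (convex_Icc a b) hcd (hx p hp)
      (hint_y p hp)).intervalIntegrable_s13 hab
  refine convexOn_intervalIntegral hP hab (fun x hx' => ?_) hint_x
  exact convexOn_intervalIntegral hP hcd (hp x hx') fun p hp' => hint_y p hp' x hx'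

lemma mul_add_one_sub_mul_half_mem_Icc {a b t x : ℝ} (ht : t ∈ Icc (0 : ℝ) 1)
    (hx : x ∈ Icc a b) : t * x + (1 - t) * (a + b) / 2 ∈ Icc a b := by
  obtain ⟨h1, h2⟩ := hx
  constructor
  · nlinarith [mul_nonneg ht.1 (sub_nonneg.2 h1),
      mul_nonneg (sub_nonneg.2 ht.2) (sub_nonneg.2 (h1.trans h2))]
  · nlinarith [mul_nonneg ht.1 (sub_nonneg.2 h2),
      mul_nonneg (sub_nonneg.2 ht.2) (sub_nonneg.2 (h1.trans h2))]

section
variable {a b : ℝ} {φ : ℝ → ℝ}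

lemma ConvexOn.comp_homothety_midpoint (hφ : ConvexOn ℝ (Icc a b) φ) {t : ℝ}
    (ht : t ∈ Icc (0 : ℝ) 1) :
    ConvexOn ℝ (Icc a b) (fun x => φ (t * x + (1 - t) * (a + b) / 2)) := by
  have hg : ∀ x, AffineMap.homothety ((a + b) / 2) t x = t * x + (1 - t) * (a + b) / 2 := by
    intro x
    rw [AffineMap.homothety_apply, vsub_eq_sub, vadd_eq_add, smul_eq_mul]
    ring
  refine ((hφ.comp_affineMap (AffineMap.homothety ((a + b) / 2) t)).subset (fun x hx => ?_)
    (convex_Icc a b)).congr fun x _ => ?_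
  · rw [mem_preimage, hg]
    exact mul_add_one_sub_mul_half_mem_Icc ht hx
  · rw [Function.comp_apply, hg]

lemma ConvexOn.comp_lineMap_midpoint (hφ : ConvexOn ℝ (Icc a b) φ) {x : ℝ}
    (hx : x ∈ Icc a b) :
    ConvexOn ℝ (Icc 0 1) (fun t => φ (t * x + (1 - t) * (a + b) / 2)) := by
  have hg : ∀ t, AffineMap.lineMap ((a + b) / 2) x t = t * x + (1 - t) * (a + b) / 2 := by
    intro t
    rw [AffineMap.lineMap_apply_ring]
    ring
  refine ((hφ.comp_affineMap (AffineMap.lineMap ((a + b) / 2) x)).subset (fun t ht => ?_)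
    (convex_Icc 0 1)).congr fun t _ => ?_
  · rw [mem_preimage, hg]
    exact mul_add_one_sub_mul_half_mem_Icc ht hx
  · rw [Function.comp_apply, hg]
end

theorem stmt13_general (a b c d : ℝ) (hab : a < b) (hcd : c < d) (f : ℝ → ℝ → ℝ)
    (hf : CoordConvexOn a b c d f) :
    CoordConvexOn 0 1 0 1 (Hmap a b c d f) := by
  obtain ⟨hf₁, hf₂⟩ := hf
  have hC : 0 ≤ 1 / ((b - a) * (d - c)) :=
    one_div_nonneg.2 (mul_pos (sub_pos.2 hab) (sub_pos.2 hcd)).le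
  have hconv_x : ∀ t ∈ Icc (0 : ℝ) 1, ∀ s ∈ Icc (0 : ℝ) 1, ∀ y ∈ Icc c d, ConvexOn ℝ (Icc a b)
      fun x => f (t * x + (1 - t) * (a + b) / 2) (s * y + (1 - s) * (c + d) / 2) :=
    fun t ht s hs y hy =>
      (hf₁ _ (mul_add_one_sub_mul_half_mem_Icc hs hy)).comp_homothety_midpoint ht
  have hconv_y : ∀ t ∈ Icc (0 : ℝ) 1, ∀ s ∈ Icc (0 : ℝ) 1, ∀ x ∈ Icc a b, ConvexOn ℝ (Icc c d)
      fun y => f (t * x + (1 - t) * (a + b) / 2) (s * y + (1 - s) * (c + d) / 2) :=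
    fun t ht s hs x hx =>
      (hf₂ _ (mul_add_one_sub_mul_half_mem_Icc ht hx)).comp_homothety_midpoint hs
  refine ⟨fun s hs => ?_, fun t ht => ?_⟩
  · refine (convexOn_intervalIntegral_intervalIntegral (convex_Icc 0 1) hab.le hcd.le
      (fun x hx y hy => ?_) (fun t ht => hconv_x t ht s hs) (fun t ht => hconv_y t ht s hs)).smul hC
    exact (hf₁ _ (mul_add_one_sub_mul_half_mem_Icc hs hy)).comp_lineMap_midpoint hx
  · refine (convexOn_intervalIntegral_intervalIntegral (convex_Icc 0 1) hab.le hcd.le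
      (fun x hx y hy => ?_) (fun s hs => hconv_x t ht s hs) (fun s hs => hconv_y t ht s hs)).smul hC
    exact (hf₂ _ (mul_add_one_sub_mul_half_mem_Icc ht hx)).comp_lineMap_midpoint hy

theorem stmt13 (a b c d : ℝ) (hab : a < b) (hcd : c < d) (f : ℝ → ℝ → ℝ)
    (hf : CoordConvexOn a b c d f)
    (hint : IntegrableOn (fun q : ℝ × ℝ => f q.1 q.2) (Set.Icc a b ×ˢ Set.Icc c d)) :
    CoordConvexOn 0 1 0 1 (Hmap a b c d f) :=
  stmt13_general a b c d hab hcd f hf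
end
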